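/- Relation between UIP and backjump levels: if the trail M has no duplicate literals, then for a clause c and literal l, (c has a unique implication point at l with respect to M and the level of the opposite of l in M is strictly positive) holds if and only if there exists a level that is a backjump level for l and c with respect to M. -/

import Mathlib

namespace SatFormal

/-- Propositional literals: positive or negative variables (variables are naturals). -/
inductive Literal where
  | Pos : Nat → Literal
  | Neg : Nat → Literal
deriving DecidableEq, Repr

/-- The variable of a literal. -/
def Literal.var : Literal → Nat
  | .Pos n => n
  | .Neg n => n

/-- The opposite literal. -/
def Literal.opp : Literal → Literal
  | .Pos n => .Neg n
  | .Neg n => .Pos n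

abbrev Clause := List Literal
abbrev Formula := List Clause
/-- A trail is a list of annotated literals: (literal, decision flag). -/
abbrev Trail := List (Literal × Bool)

/-- Underlying literals of a trail. -/
def elements (M : Trail) : List Literal := M.map Prod.fst
/-- Decision literals of a trail. -/
def decisions (M : Trail) : List Literal := (M.filter (fun a => a.2)).map Prod.fst
/-- Number of decision literals. -/
def currentLevel (M : Trail) : Nat := (M.filter (fun a => a.2)).length

/-- Prefix of the trail up to and including the first occurrence of literal `l`. -/
def prefixTo (l : Literal) (M : Trail) : Trail :=
  M.takeWhile (fun a => decide (a.1 ≠ l)) ++ (M.dropWhile (fun a => decide (a.1 ≠ l))).take 1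

/-- Decision literals preceding the first occurrence of `l` (including `l` if it is one). -/
def decisionsTo (l : Literal) (M : Trail) : List Literal := decisions (prefixTo l M)

/-- Decision level of a literal in a trail. -/
def levelOf (l : Literal) (M : Trail) : Nat := (decisionsTo l M).length

/-- Longest prefix of the trail containing only elements of level ≤ `lv`. -/
def prefixToLevel (lv : Nat) : Trail → Trail
  | [] => []
  | a :: M =>
      if a.2 then (if 0 < lv then a :: prefixToLevel (lv - 1) M else [])
      else a :: prefixToLevel lv M

/-- The last decision literal of a trail (default `Pos 0` when there is none). -/
def lastDecision (M : Trail) : Literal := (decisions M).getLastD (Literal.Pos 0)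

/-- The prefix of the trail before its last decision literal. -/
def prefixBeforeLastDecision (M : Trail) : Trail :=
  ((M.reverse.dropWhile (fun a => !a.2)).tail).reverse

/-- A clause is true in a valuation. -/
def clauseTrue (v : List Literal) (c : Clause) : Prop := ∃ l ∈ c, l ∈ v
/-- A formula is true in a valuation. -/
def formulaTrue (v : List Literal) (F : Formula) : Prop := ∀ c ∈ F, clauseTrue v c
/-- A clause is false in a valuation. -/
def clauseFalse (v : List Literal) (c : Clause) : Prop := ∀ l ∈ c, l.opp ∈ v
/-- A formula is false in a valuation. -/
def formulaFalse (v : List Literal) (F : Formula) : Prop := ∃ c ∈ F, clauseFalse v c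
/-- Consistency of a valuation. -/
def consistent (v : List Literal) : Prop := ¬ ∃ l, l ∈ v ∧ Literal.opp l ∈ v
/-- A model of a formula. -/
def isModel (v : List Literal) (F : Formula) : Prop := consistent v ∧ formulaTrue v F
/-- Satisfiability. -/
def sat (F : Formula) : Prop := ∃ v, isModel v F
/-- A formula entails a clause. -/
def entailsClause (F : Formula) (c : Clause) : Prop := ∀ v, isModel v F → clauseTrue v c
/-- A formula entails a literal. -/
def entailsLit (F : Formula) (l : Literal) : Prop := ∀ v, isModel v F → l ∈ v
/-- Logical equivalence of formulae. -/
def equivFormula (F1 F2 : Formula) : Prop := ∀ v, isModel v F1 ↔ isModel v F2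

/-- Variables of a formula. -/
def varsF (F : Formula) : Set Nat := {n | ∃ c ∈ F, ∃ l ∈ c, Literal.var l = n}
/-- Variables of a valuation. -/
def varsV (v : List Literal) : Set Nat := {n | ∃ l ∈ v, Literal.var l = n}
/-- Variables of a trail. -/
def varsT (M : Trail) : Set Nat := varsV (elements M)

/-- The formula of unit clauses corresponding to a list of literals. -/
def valToForm (v : List Literal) : Formula := v.map (fun l => [l])

/-- A clause is unit in a valuation with unit literal `l`. -/
def isUnit (c : Clause) (l : Literal) (v : List Literal) : Prop :=
  l ∈ c ∧ l ∉ v ∧ l.opp ∉ v ∧ ∀ l' ∈ c, l' ≠ l → Literal.opp l' ∈ v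

/-- `a` precedes `b` in the list `v` (first positions compared). -/
def precedes (a b : Literal) (v : List Literal) : Prop :=
  a ∈ v ∧ b ∈ v ∧ v.idxOf a < v.idxOf b

/-- A clause `c` is a reason for propagation of `l` in valuation `v`. -/
def isReason (c : Clause) (l : Literal) (v : List Literal) : Prop :=
  l ∈ c ∧ l ∈ v ∧ ∀ l' ∈ c, l' ≠ l → Literal.opp l' ∈ v ∧ precedes (Literal.opp l') l v

/-- `l` is the literal of `c` asserted last in `v`. -/
def isLastAsserted (l : Literal) (c : List Literal) (v : List Literal) : Prop :=
  l ∈ c ∧ l ∈ v ∧ ∀ l' ∈ c, l' ∈ v → l' = l ∨ precedes l' l v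

/-- The list of opposites of the literals of a clause. -/
def oppC (c : Clause) : List Literal := c.map Literal.opp

/-- `lv` is a backjump level for literal `l` and clause `c` w.r.t. trail `M`. -/
def isBackjumpLevel (lv : Nat) (l : Literal) (c : Clause) (M : Trail) : Prop :=
  clauseFalse (elements M) c ∧ isLastAsserted l.opp (oppC c) (elements M) ∧
  lv < levelOf l.opp M ∧ ∀ l' ∈ c, l' ≠ l → levelOf (Literal.opp l') M ≤ lv

/-- Minimal backjump level. -/
def isMinimalBackjumpLevel (lv : Nat) (l : Literal) (c : Clause) (M : Trail) : Prop :=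
  isBackjumpLevel lv l c M ∧ ∀ lv' < lv, ¬ isBackjumpLevel lv' l c M

/-- Unique implication point condition. -/
def isUIP (l : Literal) (c : Clause) (M : Trail) : Prop :=
  clauseFalse (elements M) c ∧ isLastAsserted l.opp (oppC c) (elements M) ∧
  ∀ l' ∈ c, l' ≠ l → levelOf (Literal.opp l') M < levelOf l.opp M

/-- Resolution of clauses `C` and `c` over the literal `l`. -/
def resolve (C c : Clause) (l : Literal) : Clause :=
  C.filter (fun x => decide (x ≠ l)) ++ c.filter (fun x => decide (x ≠ l.opp))

/-- Lexicographic extension of a relation to lists. -/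
def lexExt {X : Type _} (r : X → X → Prop) (s t : List X) : Prop :=
  (∃ rr, s = t ++ rr ∧ rr ≠ []) ∨
  (∃ rr s' t' a b, s = rr ++ a :: s' ∧ t = rr ++ b :: t' ∧ r a b)

/-- Ordering on annotated literals: decisions are greater than non-decisions. -/
def litSucc (a b : Literal × Bool) : Prop := a.2 = true ∧ b.2 = false

/-- Trail ordering: lexicographic extension of `litSucc`. -/
def trailSucc : Trail → Trail → Prop := lexExt litSucc

/-- One step of the multiset extension of a relation. -/
def multExtStep {α : Type _} (r : α → α → Prop) (S1 S2 : Multiset α) : Prop :=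
  ∃ (S S2' : Multiset α) (s1 : α), S1 = S + {s1} ∧ S2 = S + S2' ∧ ∀ s2 ∈ S2', r s1 s2

/-- Multiset extension: transitive closure of `multExtStep`. -/
def multExt {α : Type _} (r : α → α → Prop) : Multiset α → Multiset α → Prop :=
  Relation.TransGen (multExtStep r)

/-- Clause ordering induced by a trail `M` (as a list of literals). -/
def clauseSucc (M : List Literal) (C1 C2 : Clause) : Prop :=
  multExt (fun a b => precedes a b M)
    ((oppC C2).dedup : Multiset Literal) ((oppC C1).dedup : Multiset Literal)

/-! ## Basic DPLL system -/

abbrev DState := Trail × Formula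

def decideR (DecVars : Set Nat) (s1 s2 : DState) : Prop :=
  ∃ l : Literal, l.var ∈ DecVars ∧ l ∉ elements s1.1 ∧ l.opp ∉ elements s1.1 ∧
    s2.1 = s1.1 ++ [(l, true)] ∧ s2.2 = s1.2

def unitPropagateR (s1 s2 : DState) : Prop :=
  ∃ c l, c ∈ s1.2 ∧ isUnit c l (elements s1.1) ∧
    s2.1 = s1.1 ++ [(l, false)] ∧ s2.2 = s1.2

def backtrackR (s1 s2 : DState) : Prop :=
  formulaFalse (elements s1.1) s1.2 ∧ decisions s1.1 ≠ [] ∧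
  s2.1 = prefixBeforeLastDecision s1.1 ++ [((lastDecision s1.1).opp, false)] ∧ s2.2 = s1.2

def stepD (DecVars : Set Nat) (s1 s2 : DState) : Prop :=
  unitPropagateR s1 s2 ∨ backtrackR s1 s2 ∨ decideR DecVars s1 s2

def accepting (DecVars : Set Nat) (s : DState) : Prop :=
  ¬ formulaFalse (elements s.1) s.2 ∧
  ¬ ∃ l : Literal, l.var ∈ DecVars ∧ l ∉ elements s.1 ∧ l.opp ∉ elements s.1

def rejecting (s : DState) : Prop :=
  formulaFalse (elements s.1) s.2 ∧ decisions s.1 = []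

/-! ## Conflict analysis system -/

abbrev CState := Trail × Formula × Clause × Bool

def c_decide (DecVars : Set Nat) : CState → CState → Prop :=
  fun (M1, F1, C1, b1) (M2, F2, C2, b2) =>
    (∃ l : Literal, l.var ∈ DecVars ∧ l ∉ elements M1 ∧ l.opp ∉ elements M1 ∧
      M2 = M1 ++ [(l, true)]) ∧ F2 = F1 ∧ C2 = C1 ∧ b2 = b1

def c_unitPropagate (Vars : Set Nat) : CState → CState → Prop :=
  fun (M1, F1, C1, b1) (M2, F2, C2, b2) =>
    (∃ (c : Clause) (l : Literal), entailsClause F1 c ∧ l.var ∈ Vars ∧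
      isUnit c l (elements M1) ∧ M2 = M1 ++ [(l, false)]) ∧
    F2 = F1 ∧ C2 = C1 ∧ b2 = b1

def c_conflict : CState → CState → Prop :=
  fun (M1, F1, C1, b1) (M2, F2, C2, b2) =>
    b1 = false ∧ (∃ c : Clause, entailsClause F1 c ∧ clauseFalse (elements M1) c ∧ C2 = c) ∧
    M2 = M1 ∧ F2 = F1 ∧ b2 = true ∧ C1 = C1

def c_explain : CState → CState → Prop :=
  fun (M1, F1, C1, b1) (M2, F2, C2, b2) =>
    b1 = true ∧ (∃ (l : Literal) (c : Clause), l ∈ C1 ∧ isReason c l.opp (elements M1) ∧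
      entailsClause F1 c ∧ C2 = resolve C1 c l) ∧
    M2 = M1 ∧ F2 = F1 ∧ b2 = true

def c_backjump : CState → CState → Prop :=
  fun (M1, F1, C1, b1) (M2, F2, C2, b2) =>
    b1 = true ∧ (∃ (l : Literal) (lv : Nat), isBackjumpLevel lv l C1 M1 ∧
      M2 = prefixToLevel lv M1 ++ [(l, false)]) ∧
    F2 = F1 ∧ C2 = [] ∧ b2 = false

def c_learn : CState → CState → Prop :=
  fun (M1, F1, C1, b1) (M2, F2, C2, b2) =>
    b1 = true ∧ C1 ∉ F1 ∧ M2 = M1 ∧ F2 = F1 ++ [C1] ∧ C2 = C1 ∧ b2 = b1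

def stepC (F0 : Formula) (DecVars : Set Nat) (s1 s2 : CState) : Prop :=
  c_decide DecVars s1 s2 ∨ c_unitPropagate (varsF F0 ∪ DecVars) s1 s2 ∨
  c_conflict s1 s2 ∨ c_explain s1 s2 ∨ c_backjump s1 s2 ∨ c_learn s1 s2

/-! ## System with restarts and forgetting -/

abbrev RState := Trail × Formula × Clause × Bool × Bool

def r_decide (F0 : Formula) (DecVars : Set Nat) : RState → RState → Prop :=
  fun (M1, Fl1, C1, cf1, ln1) (M2, Fl2, C2, cf2, ln2) =>
    (∃ l : Literal, l.var ∈ DecVars ∧ l ∉ elements M1 ∧ l.opp ∉ elements M1 ∧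
      M2 = M1 ++ [(l, true)]) ∧
    (¬ ∃ (c : Clause) (l : Literal), c ∈ F0 ++ Fl1 ∧ isUnit c l (elements M1)) ∧
    Fl2 = Fl1 ∧ C2 = C1 ∧ cf2 = cf1 ∧ ln2 = ln1

def r_unitPropagate (F0 : Formula) : RState → RState → Prop :=
  fun (M1, Fl1, C1, cf1, ln1) (M2, Fl2, C2, cf2, ln2) =>
    (∃ (c : Clause) (l : Literal), c ∈ F0 ++ Fl1 ∧ isUnit c l (elements M1) ∧
      M2 = M1 ++ [(l, false)]) ∧
    Fl2 = Fl1 ∧ C2 = C1 ∧ cf2 = cf1 ∧ ln2 = ln1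

def r_conflict (F0 : Formula) : RState → RState → Prop :=
  fun (M1, Fl1, C1, cf1, ln1) (M2, Fl2, C2, cf2, ln2) =>
    cf1 = false ∧ (∃ c : Clause, c ∈ F0 ++ Fl1 ∧ clauseFalse (elements M1) c ∧ C2 = c) ∧
    M2 = M1 ∧ Fl2 = Fl1 ∧ cf2 = true ∧ ln2 = ln1 ∧ C1 = C1

def r_explain (F0 : Formula) : RState → RState → Prop :=
  fun (M1, Fl1, C1, cf1, ln1) (M2, Fl2, C2, cf2, ln2) =>
    cf1 = true ∧ (∃ (l : Literal) (c : Clause), l ∈ C1 ∧ isReason c l.opp (elements M1) ∧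
      c ∈ F0 ++ Fl1 ∧ C2 = resolve C1 c l) ∧
    M2 = M1 ∧ Fl2 = Fl1 ∧ cf2 = true ∧ ln2 = ln1

def r_backjumpLearn : RState → RState → Prop :=
  fun (M1, Fl1, C1, cf1, _ln1) (M2, Fl2, C2, cf2, ln2) =>
    cf1 = true ∧ (∃ (l : Literal) (lv : Nat), isMinimalBackjumpLevel lv l C1 M1 ∧
      M2 = prefixToLevel lv M1 ++ [(l, false)]) ∧
    Fl2 = Fl1 ++ [C1] ∧ C2 = [] ∧ cf2 = false ∧ ln2 = true

def r_forget : RState → RState → Prop :=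
  fun (M1, Fl1, C1, cf1, ln1) (M2, Fl2, C2, cf2, ln2) =>
    cf1 = false ∧ ln1 = true ∧
    (∃ Fc : Formula, (∀ c ∈ Fc, c ∈ Fl1) ∧
      (∀ c ∈ Fc, ¬ ∃ l : Literal, isReason c l (elements M1)) ∧
      Fl2 = Fl1.filter (fun c => decide (c ∉ Fc))) ∧
    M2 = M1 ∧ C2 = C1 ∧ cf2 = cf1 ∧ ln2 = false

def r_restart : RState → RState → Prop :=
  fun (M1, Fl1, C1, cf1, ln1) (M2, Fl2, C2, cf2, ln2) =>
    cf1 = false ∧ ln1 = true ∧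
    M2 = prefixToLevel 0 M1 ∧ Fl2 = Fl1 ∧ C2 = C1 ∧ cf2 = cf1 ∧ ln2 = false

/-- The system without `forget` (with `restart`). -/
def stepF (F0 : Formula) (DecVars : Set Nat) (s1 s2 : RState) : Prop :=
  r_decide F0 DecVars s1 s2 ∨ r_unitPropagate F0 s1 s2 ∨ r_conflict F0 s1 s2 ∨
  r_explain F0 s1 s2 ∨ r_backjumpLearn s1 s2 ∨ r_restart s1 s2

/-- The full system with both `restart` and `forget`. -/
def stepAll (F0 : Formula) (DecVars : Set Nat) (s1 s2 : RState) : Prop :=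
  stepF F0 DecVars s1 s2 ∨ r_forget s1 s2

/-- Normalization of a formula: remove duplicate literals and duplicate clauses. -/
def normF (F : Formula) : Formula := (F.map List.dedup).dedup

theorem isUIP.isBackjumpLevel_levelOf_sub_one {l : Literal} {c : Clause} {M : Trail}
    (h : isUIP l c M) (hpos : 0 < levelOf l.opp M) :
    isBackjumpLevel (levelOf l.opp M - 1) l c M :=
  ⟨h.1, h.2.1, Nat.sub_one_lt hpos.ne', fun l' hl' hne => Nat.le_sub_one_of_lt (h.2.2 l' hl' hne)⟩

theorem isBackjumpLevel.isUIP {lv : Nat} {l : Literal} {c : Clause} {M : Trail}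
    (h : isBackjumpLevel lv l c M) : isUIP l c M :=
  ⟨h.1, h.2.1, fun l' hl' hne => (h.2.2.2 l' hl' hne).trans_lt h.2.2.1⟩

theorem isBackjumpLevel.levelOf_opp_pos {lv : Nat} {l : Literal} {c : Clause} {M : Trail}
    (h : isBackjumpLevel lv l c M) : 0 < levelOf l.opp M :=
  (Nat.zero_le lv).trans_lt h.2.2.1

theorem stmt12_general (M : Trail) (c : Clause) (l : Literal) :
    (isUIP l c M ∧ 0 < levelOf l.opp M) ↔ ∃ lv, isBackjumpLevel lv l c M :=
  ⟨fun ⟨h, hpos⟩ => ⟨_, h.isBackjumpLevel_levelOf_sub_one hpos⟩,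
    fun ⟨_, h⟩ => ⟨h.isUIP, h.levelOf_opp_pos⟩⟩

/-- relation between UIP and backjump levels. -/
theorem stmt12 (M : Trail) (c : Clause) (l : Literal) (hnodup : (elements M).Nodup) :
    (isUIP l c M ∧ 0 < levelOf l.opp M) ↔ ∃ lv, isBackjumpLevel lv l c M :=
  stmt12_general M c l

end SatFormal
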